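/- arXiv:1511.08474 — 2 statements merged into one kernel-verified Lean document; each statement's English description precedes it below -/
import Mathlib

section
/- Under the formula p_i(γ, I^p_m) = (1/h_{m,i}) · (γ_i/(γ_i+1)) · (I^p_m + N_m) / (1 − Σ_{j∈M_m} γ_j/(γ_j+1)) with Σ_{j∈M_m} γ_j/(γ_j+1) < 1, the constraint 0 ≤ p_i(γ, I^p_m) ≤ p_i^max for all i ∈ M_m holds if and only if 0 ≤ I^p_m ≤ Ī^p_m, where Ī^p_m = min_{i∈M_m} (p_i^max h_{m,i} (γ_i+1)/γ_i) · (1 − Σ_{j∈M_m} γ_j/(γ_j+1)) − N_m. In particular, the feasible total interference region is a closed box (interval in each coordinate). -/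
theorem power_le_iff_le_mul_div {h γ X pmax : ℝ} (hh : 0 < h) (hγ : 0 < γ) :
    1 / h * (γ / (γ + 1)) * X ≤ pmax ↔ X ≤ pmax * h * (γ + 1) / γ := by
  have hγ1 : 0 < γ + 1 := by linarith
  rw [show 1 / h * (γ / (γ + 1)) * X = X / (h * (γ + 1) / γ) by field_simp,
    div_le_iff₀ (by positivity), mul_div_assoc', mul_assoc]

theorem power_nonneg {h γ X : ℝ} (hh : 0 < h) (hγ : 0 < γ) (hX : 0 ≤ X) :
    0 ≤ 1 / h * (γ / (γ + 1)) * X := by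
  have hγ1 : 0 < γ + 1 := by linarith
  positivity

theorem le_inf'_mul_sub_iff {ι : Type*} {s : Finset ι} (hs : s.Nonempty) (f : ι → ℝ)
    {x N D : ℝ} (hD : 0 < D) :
    x ≤ s.inf' hs f * D - N ↔ ∀ i ∈ s, (x + N) / D ≤ f i := by
  rw [← Finset.le_inf'_iff hs, div_le_iff₀ hD]
  constructor <;> intro H <;> linarith

theorem stmt4_general (M : ℕ) (Mm : Finset (Fin M)) (hMm : Mm.Nonempty)
    (hgain pmax γ : Fin M → ℝ) (Nm : ℝ)
    (hpos : ∀ i, 0 < hgain i) (hNm : 0 < Nm)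
    (hγ : ∀ i ∈ Mm, 0 < γ i)
    (hsum : (∑ j ∈ Mm, γ j / (γ j + 1)) < 1)
    (Ibar : ℝ)
    (hIbar : Ibar = Mm.inf' hMm (fun i => pmax i * hgain i * (γ i + 1) / γ i)
      * (1 - ∑ j ∈ Mm, γ j / (γ j + 1)) - Nm)
    (pfun : ℝ → Fin M → ℝ)
    (hpfun : ∀ Ip i, pfun Ip i = (1 / hgain i) * (γ i / (γ i + 1)) *
      ((Ip + Nm) / (1 - ∑ j ∈ Mm, γ j / (γ j + 1)))) :
    ∀ Ip : ℝ, 0 ≤ Ip →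
      (Ip ≤ Ibar ↔ ∀ i ∈ Mm, 0 ≤ pfun Ip i ∧ pfun Ip i ≤ pmax i) := by
  intro Ip hIp
  have hD : 0 < 1 - ∑ j ∈ Mm, γ j / (γ j + 1) := by linarith
  have hX : 0 ≤ (Ip + Nm) / (1 - ∑ j ∈ Mm, γ j / (γ j + 1)) := by positivity
  rw [hIbar, le_inf'_mul_sub_iff hMm _ hD]
  refine forall₂_congr fun i hi => ?_
  rw [hpfun, power_le_iff_le_mul_div (hpos i) (hγ i hi)]
  exact (and_iff_right (power_nonneg (hpos i) (hγ i hi) hX)).symm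

/-- Under the power formula of Lemma 1, the power constraints
`0 ≤ p_i ≤ p_i^max` for all in-cell users hold iff `0 ≤ Ip ≤ Ī^p_m`, where
`Ī^p_m` is the total interference temperature limit: the feasible total
interference region is a closed interval (box in each coordinate). -/
theorem stmt4 (M : ℕ) (Mm : Finset (Fin M)) (hMm : Mm.Nonempty)
    (hgain pmax γ : Fin M → ℝ) (Nm : ℝ)
    (hpos : ∀ i, 0 < hgain i) (hpmax : ∀ i, 0 < pmax i) (hNm : 0 < Nm)
    (hγ : ∀ i ∈ Mm, 0 < γ i)
    (hsum : (∑ j ∈ Mm, γ j / (γ j + 1)) < 1)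
    (Ibar : ℝ)
    (hIbar : Ibar = Mm.inf' hMm (fun i => pmax i * hgain i * (γ i + 1) / γ i)
      * (1 - ∑ j ∈ Mm, γ j / (γ j + 1)) - Nm)
    (hIbar0 : 0 ≤ Ibar)
    (pfun : ℝ → Fin M → ℝ)
    (hpfun : ∀ Ip i, pfun Ip i = (1 / hgain i) * (γ i / (γ i + 1)) *
      ((Ip + Nm) / (1 - ∑ j ∈ Mm, γ j / (γ j + 1)))) :
    ∀ Ip : ℝ, 0 ≤ Ip →
      (Ip ≤ Ibar ↔ ∀ i ∈ Mm, 0 ≤ pfun Ip i ∧ pfun Ip i ≤ pmax i) :=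
  stmt4_general M Mm hMm hgain pmax γ Nm hpos hNm hγ hsum Ibar hIbar pfun hpfun
end

section
/- Assume A = (I − H(γ))^{-1} exists and is entrywise nonnegative with at least one positive entry in each row, and define Φ^max_m = min_{i∈M_m} p_i^max h_{m,i}(γ_i+1)/γ_i and C^p = Φ^max − A N^p. Then the set of cognitive interference vectors I^{s→p} ≥ 0 for which all primary users are protected (i.e., 0 ≤ p_i(γ, I^{s→p}) ≤ p_i^max for all primary users i) equals the polyhedron { I ∈ ℝ^{B^p} : I ≥ 0, A I ≤ C^p }. -/
lemma stmt8_key (γ h pmax X : ℝ) (hγ : 0 < γ) (hh : 0 < h) :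
    γ / (γ + 1) * X / h ≤ pmax ↔ X ≤ pmax * h * (γ + 1) / γ := by
  have h1 : (0:ℝ) < γ + 1 := by linarith
  rw [div_le_iff₀ hh, div_mul_eq_mul_div, div_le_iff₀ h1, le_div_iff₀ hγ]
  constructor <;> intro hx <;> nlinarith

/-- With `A = (I-H(γ))⁻¹` entrywise nonnegative (with a positive
entry in each row), `Φ^max_m = min_{i∈M_m} p_i^max h_{m,i}(γ_i+1)/γ_i` and
`C^p = Φ^max - A N^p`, the set of cognitive interference vectors protecting
all primary users equals the polyhedron `{I : I ≥ 0, A I ≤ C^p}`. -/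
theorem stmt8 (B Mp : ℕ) (b : Fin Mp → Fin B) (hb : Function.Surjective b)
    (h : Fin B → Fin Mp → ℝ) (γ pmax : Fin Mp → ℝ) (N : Fin B → ℝ)
    (hpos : ∀ m i, 0 < h m i) (hγ : ∀ i, 0 < γ i)
    (hpmax : ∀ i, 0 < pmax i) (hN : ∀ m, 0 < N m)
    (A : Matrix (Fin B) (Fin B) ℝ)
    (hA : ∀ m n, 0 ≤ A m n) (hArow : ∀ m, ∃ n, 0 < A m n)
    (Φmax C : Fin B → ℝ)
    (hΦmax : ∀ m, (∃ i, b i = m ∧ Φmax m = pmax i * h m i * (γ i + 1) / γ i)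
      ∧ ∀ i, b i = m → Φmax m ≤ pmax i * h m i * (γ i + 1) / γ i)
    (hC : ∀ m, C m = Φmax m - A.mulVec N m)
    (pfun : (Fin B → ℝ) → Fin Mp → ℝ)
    (hpfun : ∀ Is i, pfun Is i = (γ i / (γ i + 1)) *
      (A.mulVec (fun m => N m + Is m)) (b i) / h (b i) i)
    (hfeas0 : ∀ i, 0 ≤ pfun 0 i ∧ pfun 0 i ≤ pmax i) :
    {Is : Fin B → ℝ | (∀ m, 0 ≤ Is m) ∧
        ∀ i, 0 ≤ pfun Is i ∧ pfun Is i ≤ pmax i}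
      = {I : Fin B → ℝ | (∀ m, 0 ≤ I m) ∧ ∀ m, A.mulVec I m ≤ C m} := by
  have hsplit : ∀ Is : Fin B → ℝ,
      A.mulVec (fun m => N m + Is m) = fun m => A.mulVec N m + A.mulVec Is m := by
    intro Is
    have : (fun m => N m + Is m) = N + Is := rfl
    rw [this, Matrix.mulVec_add]; rfl
  ext Is
  simp only [Set.mem_setOf_eq]
  constructor
  · rintro ⟨hnn, hp⟩
    refine ⟨hnn, fun m => ?_⟩
    obtain ⟨⟨i, hbi, hΦ⟩, _⟩ := hΦmax m
    have h2 := (hp i).2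
    rw [hpfun, hsplit] at h2
    rw [stmt8_key _ _ _ _ (hγ i) (hpos _ i)] at h2
    rw [hC, hΦ, hbi] at *
    linarith [h2]
  · rintro ⟨hnn, hAI⟩
    refine ⟨hnn, fun i => ?_⟩
    have hX : 0 ≤ A.mulVec (fun m => N m + Is m) (b i) := by
      rw [Matrix.mulVec, dotProduct]
      apply Finset.sum_nonneg
      intro n _
      have hv : (0:ℝ) ≤ N n + Is n := by have := (hN n).le; have := hnn n; linarith
      simpa using mul_nonneg (hA _ _) hv
    constructor
    · rw [hpfun]
      have h1 : (0:ℝ) < γ i + 1 := by linarith [hγ i]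
      exact div_nonneg (mul_nonneg (div_nonneg (hγ i).le h1.le) hX) (hpos _ i).le
    · rw [hpfun, hsplit, stmt8_key _ _ _ _ (hγ i) (hpos _ i)]
      have h2 := hAI (b i)
      have h3 := (hΦmax (b i)).2 i rfl
      rw [hC] at h2
      linarith
end
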